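/- arXiv:2003.02882 — 6 statements merged into one kernel-verified Lean document; each statement's English description precedes it below -/
import Mathlib

section
/- Let X be a set of size n and let x₁, …, x_m be elements of X, not necessarily distinct. There exists a bijection σ : X → {1, …, n} such that for each i = 1, …, m: (a) σ(x_i) ≤ i, and (b) for every d with 2 ≤ d ≤ i, if σ(x_i) = d then there exists j ∈ {1, …, i−1} with σ(x_j) = d − 1. -/
/-!
Order `X` by the position of the first occurrence of each element in `x` (elements that never
occur come last) and let `σ` number `X` along this order. Every label below `σ (x i)` then
belongs to an element occurring before `x i` first does, so it is attained by some `x j` with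
`j < i`. Both (a) and (b) follow: (a) by counting these labels, (b) by taking the label
`σ (x i) - 1`.
-/

def IsCanonicalLabelling {X : Type*} {n m : ℕ} (x : Fin m → X) (σ : X ≃ Fin n) : Prop :=
  ∀ i : Fin m, ∀ v < σ (x i), ∃ j < i, σ (x j) = v

theorem Equiv.exists_monotone_comp_symm {X α : Type*} [Fintype X] [LinearOrder α] {n : ℕ}
    (hn : Fintype.card X = n) (f : X → α) : ∃ σ : X ≃ Fin n, Monotone (f ∘ σ.symm) := by
  let e := Fintype.equivFinOfCardEq hn
  exact ⟨e.trans (Tuple.sort (f ∘ e.symm)).symm, Tuple.monotone_sort (f ∘ e.symm)⟩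

section FirstIndex

variable {X : Type*} [DecidableEq X] {m : ℕ} (x : Fin m → X)

def firstIndex (y : X) : WithTop (Fin m) :=
  (Finset.univ.filter (x · = y)).min

theorem firstIndex_apply_le (i : Fin m) : firstIndex x (x i) ≤ i :=
  Finset.min_le (by simp)

theorem apply_eq_of_firstIndex_eq {y : X} {j : Fin m} (h : firstIndex x y = j) : x j = y := by
  simpa using Finset.mem_of_min h

end FirstIndex

theorem exists_isCanonicalLabelling {X : Type*} [Fintype X] {n m : ℕ}
    (hn : Fintype.card X = n) (x : Fin m → X) : ∃ σ : X ≃ Fin n, IsCanonicalLabelling x σ := by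
  classical
  obtain ⟨σ, hσ⟩ := Equiv.exists_monotone_comp_symm hn (firstIndex x)
  refine ⟨σ, fun i v hv => ?_⟩
  have hle : firstIndex x (σ.symm v) ≤ i :=
    calc firstIndex x (σ.symm v) ≤ firstIndex x (x i) := by simpa using hσ hv.le
      _ ≤ i := firstIndex_apply_le x i
  obtain ⟨j, hj⟩ := WithTop.ne_top_iff_exists.mp (ne_top_of_le_ne_top WithTop.coe_ne_top hle)
  have hxj : x j = σ.symm v := apply_eq_of_firstIndex_eq x hj.symm
  refine ⟨j, lt_of_le_of_ne (WithTop.coe_le_coe.mp (hj ▸ hle)) fun hji => ?_, by simp [hxj]⟩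
  subst hji
  simp [hxj] at hv

namespace IsCanonicalLabelling

variable {X : Type*} {n m : ℕ} {x : Fin m → X} {σ : X ≃ Fin n}

theorem val_apply_le (hσ : IsCanonicalLabelling x σ) (i : Fin m) : (σ (x i)).val ≤ i.val := by
  classical
  have hsub : Finset.Iio (σ (x i)) ⊆ (Finset.Iio i).image (σ ∘ x) := fun v hv => by
    obtain ⟨j, hj, hjv⟩ := hσ i v (Finset.mem_Iio.mp hv)
    exact Finset.mem_image.mpr ⟨j, Finset.mem_Iio.mpr hj, hjv⟩
  calc (σ (x i)).val = (Finset.Iio (σ (x i))).card := (Fin.card_Iio _).symm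
    _ ≤ ((Finset.Iio i).image (σ ∘ x)).card := Finset.card_le_card hsub
    _ ≤ (Finset.Iio i).card := Finset.card_image_le
    _ = i.val := Fin.card_Iio i

end IsCanonicalLabelling

/-- Soundness core for ordered constant and canonicity constraints: given not
necessarily distinct `x₁, …, x_m` in a set `X` of size `n`, there is a
bijection `σ : X ≃ {1, …, n}` (here `Fin n`, 1-indexed as `val + 1`) such that
`σ(x_i) ≤ i` and whenever `σ(x_i) = d` with `2 ≤ d ≤ i`, some earlier `x_j`
(`j < i`) has `σ(x_j) = d - 1`. -/
theorem ordered_constants_bijection {X : Type*} [Fintype X] {n m : ℕ}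
    (hn : Fintype.card X = n) (x : Fin m → X) :
    ∃ σ : X ≃ Fin n,
      ∀ i : Fin m,
        ((σ (x i)).val + 1 ≤ i.val + 1) ∧
        (∀ d : ℕ, 2 ≤ d → d ≤ i.val + 1 → (σ (x i)).val + 1 = d →
          ∃ j : Fin m, j.val < i.val ∧ (σ (x j)).val + 1 = d - 1) := by
  obtain ⟨σ, hσ⟩ := exists_isCanonicalLabelling hn x
  refine ⟨σ, fun i => ⟨Nat.succ_le_succ (hσ.val_apply_le i), fun d hd _ hσd => ?_⟩⟩
  obtain ⟨j, hji, hj⟩ := hσ i ⟨d - 2, by omega⟩ (Fin.mk_lt_of_lt_val (by omega))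
  exact ⟨j, hji, by rw [hj, Fin.val_mk]; omega⟩
end

section
/- Let X be a set of size n and let h be any function from X to X. There exists a bijection σ : X → {1, …, n} such that for every v ∈ X, if σ(v) = j then σ(h(v)) ≤ j + 1. -/
/-!
List the elements of `X` so that `h` moves each entry at most one place to the right. Such a
list is built by induction: put some `c` first and continue with a list of the remaining
elements that starts with `h c` whenever `h c` is among them. Indexing by positions in the
list gives `σ`.
-/

def MovesAtMostOneRight {X : Type*} (h : X → X) (L : List X) : Prop :=
  ∀ i j (hi : i < L.length) (hj : j < L.length), L[j] = h L[i] → j ≤ i + 1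

section
variable {X : Type*} {h : X → X}

theorem MovesAtMostOneRight.cons {L : List X} (hL : MovesAtMostOneRight h L) {c : X}
    (hc : h c ∉ L.tail) : MovesAtMostOneRight h (c :: L) := by
  rintro (_ | i) (_ | _ | j) hi hj hij
  all_goals simp only [List.getElem_cons_succ, List.getElem_cons_zero] at hij
  all_goals try omega
  · have hmem := List.getElem_mem (l := L.tail) (n := j) (by simp at hj ⊢; omega)
    rw [List.getElem_tail, hij] at hmem
    exact (hc hmem).elim
  · have := hL i (j + 1) (by simpa using hi) (by simpa using hj) hij
    omega

variable [DecidableEq X]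

/-- Keeping a prescribed `y` out of the tail (so `y` comes first or not at all) is the
strengthening that makes the induction go through, with `y := h c`. -/
theorem exists_nodup_movesAtMostOneRight (h : X → X) (s : Finset X) (y : X) :
    ∃ L : List X, L.Nodup ∧ L.toFinset = s ∧ MovesAtMostOneRight h L ∧ y ∉ L.tail := by
  induction s using Finset.strongInduction generalizing y with
  | H s ih =>
  rcases s.eq_empty_or_nonempty with rfl | ⟨d, hd⟩
  · exact ⟨[], List.nodup_nil, rfl, fun _ _ hi => absurd hi (Nat.not_lt_zero _), by simp⟩
  obtain ⟨c, hc, hyc⟩ : ∃ c ∈ s, y ∈ s → c = y := by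
    by_cases hy : y ∈ s
    · exact ⟨y, hy, fun _ => rfl⟩
    · exact ⟨d, hd, fun hy' => absurd hy' hy⟩
  obtain ⟨L, hnd, hL, hmoves, hhc⟩ := ih (s.erase c) (Finset.erase_ssubset hc) (h c)
  have hmem : ∀ x, x ∈ L ↔ x ≠ c ∧ x ∈ s := by simp [← List.mem_toFinset, hL]
  refine ⟨c :: L, List.nodup_cons.2 ⟨by simp [hmem], hnd⟩, ?_, hmoves.cons hhc, ?_⟩
  · rw [List.toFinset_cons, hL, Finset.insert_erase hc]
  · intro hy
    obtain ⟨hyc', hys⟩ := (hmem y).1 hy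
    exact hyc' (hyc hys).symm

end

theorem exists_equiv_fin_le_succ {X : Type*} [Fintype X] {n : ℕ}
    (hn : Fintype.card X = n) (h : X → X) :
    ∃ σ : X ≃ Fin n, ∀ v, (σ (h v) : ℕ) ≤ σ v + 1 := by
  classical
  rcases isEmpty_or_nonempty X with hX | ⟨⟨y⟩⟩
  · exact ⟨Fintype.equivFinOfCardEq hn, fun v => isEmptyElim v⟩
  obtain ⟨L, hnd, hL, hmoves, -⟩ := exists_nodup_movesAtMostOneRight h Finset.univ y
  have hall : ∀ x, x ∈ L := by simp [← List.mem_toFinset, hL]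
  have hlen : L.length = n := by
    rw [← List.toFinset_card_of_nodup hnd, hL, Finset.card_univ, hn]
  let e := hnd.getEquivOfForallMemList L hall
  refine ⟨e.symm.trans (finCongr hlen), fun v => ?_⟩
  have hpos : ∀ x, L[(e.symm x : ℕ)] = x := fun x => e.apply_symm_apply x
  simpa using hmoves _ _ (e.symm v).2 (e.symm (h v)).2 (by rw [hpos, hpos])

/-- Soundness core for ordered range constraints on a single-sorted unary
function: for any `h : X → X` on a set `X` of size `n`, there is a bijection
`σ : X ≃ {1, …, n}` (here `Fin n`, 1-indexed as `val + 1`) such that for every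
`v`, if `σ(v) = j` then `σ(h(v)) ≤ j + 1`. -/
theorem ordered_range_bijection {X : Type*} [Fintype X] {n : ℕ}
    (hn : Fintype.card X = n) (h : X → X) :
    ∃ σ : X ≃ Fin n,
      ∀ v : X, ∀ j : ℕ, (σ v).val + 1 = j → (σ (h v)).val + 1 ≤ j + 1 := by
  obtain ⟨σ, hσ⟩ := exists_equiv_fin_le_succ hn h
  refine ⟨σ, fun v j hj => ?_⟩
  have := hσ v
  omega
end

section
/- Let B be a finite set of size n enumerated as b₁, …, b_n, and let y₁, …, y_m be elements of B, not necessarily distinct. There exists a permutation σ of B such that for each i = 1, …, min{m, n}, σ(y_i) ∈ {b₁, …, b_i}. -/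
/-!
Transport along `b` reduces the claim to permutations `τ` of `Fin n` with `τ (y i) ≤ i`.
These are built greedily along the sequence: if the new term `y m` is sent above `m`, composing
with the transposition of `m` and its image repairs it, and disturbs no earlier term, since those
are all sent below `m`.
-/

open Equiv

namespace Fin

variable {n : ℕ}

theorem exists_perm_apply_le_and_eq_of_apply_lt (τ : Perm (Fin n)) (x : Fin n) (m : ℕ) :
    ∃ τ' : Perm (Fin n), (m < n → (τ' x : ℕ) ≤ m) ∧ ∀ z, (τ z : ℕ) < m → τ' z = τ z := by
  by_cases h : ∃ hm : m < n, m < τ x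
  · obtain ⟨hm, hx⟩ := h
    refine ⟨swap ⟨m, hm⟩ (τ x) * τ, fun _ => by simp, fun z hz => ?_⟩
    exact swap_apply_of_ne_of_ne (Fin.ne_of_lt hz) (Fin.ne_of_lt (hz.trans hx))
  · simp only [not_exists, not_lt] at h
    exact ⟨τ, h, fun _ _ => rfl⟩

theorem exists_perm_apply_le {m : ℕ} (y : Fin m → Fin n) :
    ∃ τ : Perm (Fin n), ∀ i : Fin m, (i : ℕ) < n → (τ (y i) : ℕ) ≤ i := by
  induction m with
  | zero => exact ⟨1, fun i => i.elim0⟩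
  | succ m ih =>
    obtain ⟨τ, hτ⟩ := ih (y ∘ castSucc)
    obtain ⟨τ', hlast, hagree⟩ := exists_perm_apply_le_and_eq_of_apply_lt τ (y (last m)) m
    refine ⟨τ', lastCases hlast fun i hi => ?_⟩
    have hτi : (τ (y i.castSucc) : ℕ) ≤ i := hτ i hi
    rw [hagree _ (by omega)]
    exact hτi

end Fin

theorem drd_strong_ordered_range_general {B : Type*} {n m : ℕ}
    (b : Fin n ≃ B) (y : Fin m → B) :
    ∃ σ : Equiv.Perm B,
      ∀ i : Fin m, (i : ℕ) < n →
        ∃ j : Fin n, (j : ℕ) ≤ (i : ℕ) ∧ σ (y i) = b j := by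
  obtain ⟨τ, hτ⟩ := Fin.exists_perm_apply_le (b.symm ∘ y)
  exact ⟨b.permCongr τ, fun i hi => ⟨τ (b.symm (y i)), hτ i hi, rfl⟩⟩

/-- Soundness core for strong ordered range constraints for DRD functions:
given an enumeration `b : Fin n ≃ B` of a finite set `B` and an arbitrary
sequence `y : Fin m → B`, there is a permutation `σ` of `B` such that for
each `i < min m n` (0-indexed), `σ(y_i) ∈ {b₀, …, b_i}`. -/
theorem drd_strong_ordered_range {B : Type*} [Fintype B] {n m : ℕ}
    (b : Fin n ≃ B) (y : Fin m → B) :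
    ∃ σ : Equiv.Perm B,
      ∀ i : Fin m, (i : ℕ) < n →
        ∃ j : Fin n, (j : ℕ) ≤ (i : ℕ) ∧ σ (y i) = b j :=
  drd_strong_ordered_range_general b y
end

section
/- Let A be a finite set, X a subset of A enumerated as a₁, …, a_m, and let y₁, …, y_n be elements of A, not necessarily distinct. There exists a permutation σ of A that fixes every element of A \ X such that for each k = 1, …, min{m, n}: (a) σ(y_k) ∈ {a₁, …, a_k} ∪ (A \ X), and (b) for every d with 2 ≤ d ≤ k, if σ(y_k) = a_d then there exists i ∈ {1, …, k−1} with σ(y_i) = a_{d−1}. -/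
/-!
Call `k` a new index if `y k ∈ X` and the value `y k` does not occur earlier, and let `r k` be the
number of new indices below `k`. New indices carry distinct elements of `X`, so `r k < m`, `r` is
injective on new indices, and `r k ≤ k`. Send `y k ↦ a (r k)` for every new index `k` and extend
this to a permutation of `A` that is the identity outside `X`. The value `y k` first appears at a
new index `k₀ ≤ k`, so it goes to `a (r k₀)`; if `r k₀ = d ≥ 1`, then the new index of rank
`d - 1` lies before `k₀` and its value goes to `a (d - 1)`.
-/

theorem Nat.exists_lt_count_eq {p : ℕ → Prop} [DecidablePred p] {d k : ℕ}
    (h : d < count p k) : ∃ i < k, p i ∧ count p i = d :=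
  have hd : ∀ hf : (Set.ofPred p).Finite, d < hf.toFinset.card :=
    fun hf => h.trans_le (count_le_card hf k)
  ⟨nth p d, nth_lt_of_lt_count h, nth_mem d hd, count_nth hd⟩

theorem Equiv.Perm.exists_extending_pair_of_mem {α ι : Type*} [Finite ι] {s : Set α}
    (f g : ι → α) (hf : Function.Injective f) (hg : Function.Injective g)
    (hfs : ∀ i, f i ∈ s) (hgs : ∀ i, g i ∈ s) :
    ∃ σ : Perm α, (∀ x ∉ s, σ x = x) ∧ ∀ i, σ (f i) = g i := by
  classical
  obtain ⟨τ, hτ⟩ := exists_extending_pair (fun i => (⟨f i, hfs i⟩ : s)) (fun i => ⟨g i, hgs i⟩)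
    (fun _ _ h => hf (congrArg Subtype.val h)) (fun _ _ h => hg (congrArg Subtype.val h))
  refine ⟨ofSubtype τ, fun x hx => ofSubtype_apply_of_not_mem τ hx, fun i => ?_⟩
  rw [ofSubtype_apply_of_mem τ (hfs i), hτ]

section
variable {A : Type*} (X : Set A) (y : ℕ → A)

def IsNewValue (k : ℕ) : Prop := y k ∈ X ∧ ∀ i < k, y i ≠ y k

variable {X y}

theorem injOn_isNewValue : Set.InjOn y {k | IsNewValue X y k} := by
  intro i hi k hk h
  by_contra hne
  rcases lt_or_gt_of_ne hne with hlt | hlt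
  · exact hk.2 i hlt h
  · exact hi.2 k hlt h.symm

theorem exists_isNewValue_le {k : ℕ} (hk : y k ∈ X) :
    ∃ k₀ ≤ k, IsNewValue X y k₀ ∧ y k₀ = y k := by
  classical
  have hex : ∃ i, y i = y k := ⟨k, rfl⟩
  have hfirst := Nat.find_spec hex
  exact ⟨Nat.find hex, Nat.find_min' hex rfl,
    ⟨hfirst.symm ▸ hk, fun i hi h => Nat.find_min hex hi (h.trans hfirst)⟩, hfirst⟩

theorem count_isNewValue_lt [DecidablePred (IsNewValue X y)] {m : ℕ} (a : Fin m ≃ X) {k : ℕ}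
    (hk : IsNewValue X y k) : Nat.count (IsNewValue X y) k < m := by
  have : Finite X := .of_equiv _ a
  have hfin : {k | IsNewValue X y k}.Finite :=
    X.toFinite.of_injOn (fun _ hk => hk.1) injOn_isNewValue
  calc Nat.count (IsNewValue X y) k < hfin.toFinset.card := Nat.count_lt_card hfin hk
    _ = {k | IsNewValue X y k}.ncard := (Set.ncard_eq_toFinset_card _ hfin).symm
    _ ≤ X.ncard := Set.ncard_le_ncard_of_injOn y (fun _ hk => hk.1) injOn_isNewValue X.toFinite
    _ = m := by rw [← Nat.card_coe_set_eq, ← Nat.card_congr a, Nat.card_fin]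

end

theorem exists_perm_ordered_canonical {A : Type*} {m : ℕ} (X : Set A) (a : Fin m ≃ X)
    (y : ℕ → A) :
    ∃ σ : Equiv.Perm A, (∀ v ∉ X, σ v = v) ∧ ∀ k,
      ((∃ j : Fin m, (j : ℕ) ≤ k ∧ σ (y k) = a j) ∨ σ (y k) ∉ X) ∧
      ∀ d : Fin m, 1 ≤ (d : ℕ) → σ (y k) = a d →
        ∃ i < k, ∃ d' : Fin m, (d' : ℕ) + 1 = d ∧ σ (y i) = a d' := by
  classical
  have : Finite X := .of_equiv _ a
  have : Finite {k // IsNewValue X y k} :=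
    .of_injective (fun k => (⟨y k, k.2.1⟩ : X))
      fun i j h => Subtype.ext (injOn_isNewValue i.2 j.2 (congrArg Subtype.val h))
  let rank (k : {k // IsNewValue X y k}) : Fin m :=
    ⟨Nat.count (IsNewValue X y) k, count_isNewValue_lt a k.2⟩
  obtain ⟨σ, hfix, hσ⟩ := Equiv.Perm.exists_extending_pair_of_mem
    (fun k : {k // IsNewValue X y k} => y k) (fun k => a (rank k))
    (fun i j h => Subtype.ext (injOn_isNewValue i.2 j.2 h))
    (fun i j h => Subtype.ext
      (Nat.count_injective i.2 j.2 (congrArg Fin.val (a.injective (Subtype.ext h)))))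
    (fun k => k.2.1) (fun k => (a (rank k)).2)
  refine ⟨σ, hfix, fun k => ?_⟩
  by_cases hk : y k ∈ X
  · obtain ⟨k₀, hk₀k, hk₀, hyk₀⟩ := exists_isNewValue_le hk
    have hσk : σ (y k) = a (rank ⟨k₀, hk₀⟩) := hyk₀ ▸ hσ ⟨k₀, hk₀⟩
    refine ⟨.inl ⟨_, (Nat.count_le _).trans hk₀k, hσk⟩, fun d hd hσd => ?_⟩
    have hdk₀ : (d : ℕ) = Nat.count (IsNewValue X y) k₀ :=
      congrArg Fin.val (a.injective (Subtype.ext (hσd.symm.trans hσk)))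
    obtain ⟨i, hik₀, hi, hcount⟩ :=
      Nat.exists_lt_count_eq (p := IsNewValue X y) (d := d - 1) (k := k₀) (by omega)
    exact ⟨i, hik₀.trans_le hk₀k, rank ⟨i, hi⟩, by simp only [rank, hcount]; omega, hσ ⟨i, hi⟩⟩
  · have hσk := hfix _ hk
    rw [hσk]
    exact ⟨.inr hk, fun d _ hσd => absurd (hσd ▸ (a d).2) hk⟩

theorem constant_symmetry_breaking_extended_general {A : Type*}
    {m n : ℕ} (X : Set A) (a : Fin m ≃ X) (y : Fin n → A) :
    ∃ σ : Equiv.Perm A,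
      (∀ v : A, v ∉ X → σ v = v) ∧
      ∀ k : Fin n, (k : ℕ) < m →
        ((∃ j : Fin m, (j : ℕ) ≤ (k : ℕ) ∧ σ (y k) = (a j : A)) ∨ σ (y k) ∉ X) ∧
        (∀ d : Fin m, 1 ≤ (d : ℕ) → (d : ℕ) ≤ (k : ℕ) → σ (y k) = (a d : A) →
          ∃ i : Fin n, (i : ℕ) < (k : ℕ) ∧
            ∃ d' : Fin m, (d' : ℕ) + 1 = (d : ℕ) ∧ σ (y i) = (a d' : A)) := by
  obtain _ | n := n
  · exact ⟨1, fun _ _ => rfl, fun k => k.elim0⟩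
  -- Extending `y` to `ℕ` periodically is harmless: the claims at `k` only involve indices `≤ k`.
  obtain ⟨σ, hfix, hσ⟩ := exists_perm_ordered_canonical X a (fun i => y (Fin.ofNat (n + 1) i))
  refine ⟨σ, hfix, fun k _ => ?_⟩
  obtain ⟨hsmall, hprev⟩ := hσ k
  simp only [Fin.ofNat_val_eq_self] at hsmall hprev
  refine ⟨hsmall, fun d hd _ hσd => ?_⟩
  obtain ⟨i, hik, d', hd', hσi⟩ := hprev d hd hσd
  exact ⟨Fin.ofNat (n + 1) i, by rwa [Fin.val_ofNat, Nat.mod_eq_of_lt (hik.trans k.isLt)],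
    d', hd', hσi⟩

/-- Extended soundness core for constant symmetry breaking: with `X ⊆ A`
enumerated by `a : Fin m ≃ X` and an arbitrary sequence `y : Fin n → A`, there
is a permutation `σ` of `A` fixing `A \ X` pointwise such that for each
`k < min n m` (0-indexed): (a) `σ(y_k) ∈ {a₀, …, a_k} ∪ (A \ X)`, and (b) if
`σ(y_k) = a_d` with `1 ≤ d ≤ k` (0-indexed, i.e. `2 ≤ d ≤ k` 1-indexed) then
some earlier `y_i` (`i < k`) has `σ(y_i) = a_{d-1}`. -/
theorem constant_symmetry_breaking_extended {A : Type*} [Fintype A]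
    {m n : ℕ} (X : Set A) (a : Fin m ≃ X) (y : Fin n → A) :
    ∃ σ : Equiv.Perm A,
      (∀ v : A, v ∉ X → σ v = v) ∧
      ∀ k : Fin n, (k : ℕ) < m →
        ((∃ j : Fin m, (j : ℕ) ≤ (k : ℕ) ∧ σ (y k) = (a j : A)) ∨ σ (y k) ∉ X) ∧
        (∀ d : Fin m, 1 ≤ (d : ℕ) → (d : ℕ) ≤ (k : ℕ) → σ (y k) = (a d : A) →
          ∃ i : Fin n, (i : ℕ) < (k : ℕ) ∧
            ∃ d' : Fin m, (d' : ℕ) + 1 = (d : ℕ) ∧ σ (y i) = (a d' : A)) :=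
  constant_symmetry_breaking_extended_general X a y
end

section
/- Let B be a finite set, X a subset of B enumerated as b₁, …, b_n, and let y₁, …, y_m be elements of B, not necessarily distinct. There exists a permutation σ of B that fixes every element of B \ X such that for each i = 1, …, min{m, n}, σ(y_i) ∈ {b₁, …, b_i} ∪ (B \ X). -/
/-!
Rank the elements of `X` by the position of their first occurrence in `y`, elements that never
occur coming last, and let `σ` send the element of rank `r` to `b r`. Along the ranks the
positions of first occurrence increase strictly, so the element of rank `r` first occurs at a
position `≥ r`; hence if `y i ∈ X` has rank `r`, then `r ≤ i` and `σ (y i) = b r`.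
-/

open Equiv Function

theorem Fin.val_le_of_strictMono {n : ℕ} {g : Fin n → ℕ} (hg : StrictMono g) (r : Fin n) :
    (r : ℕ) ≤ g r := by
  obtain ⟨r, hr⟩ := r
  induction r with
  | zero => exact Nat.zero_le _
  | succ r ih =>
    have hlt : g ⟨r, by omega⟩ < g ⟨r + 1, hr⟩ := hg (Fin.mk_lt_mk.mpr r.lt_succ_self)
    exact Nat.succ_le_of_lt ((ih (by omega)).trans_lt hlt)

section FirstOccurrence

variable {m n : ℕ} (z : Fin m → Option (Fin n))

/-- Values that never occur get the key `m + k`, which keeps the key injective. -/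
def firstOccurrence (k : Fin n) : ℕ :=
  if h : ∃ i, z i = some k then Fin.find _ h else m + k

variable {z}

theorem firstOccurrence_le {i : Fin m} {k : Fin n} (h : z i = some k) :
    firstOccurrence z k ≤ i := by
  have hex : ∃ i, z i = some k := ⟨i, h⟩
  rw [firstOccurrence, dif_pos hex]
  exact Fin.find_le_of_pos hex h

theorem apply_firstOccurrence_of_exists {k : Fin n} (h : ∃ i, z i = some k) :
    z ⟨firstOccurrence z k, by rw [firstOccurrence, dif_pos h]; exact Fin.is_lt _⟩ = some k := by
  simp only [firstOccurrence, dif_pos h, Fin.eta]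
  exact Fin.find_spec h

variable (z)

theorem firstOccurrence_injective : Injective (firstOccurrence z) := by
  intro k k' hkk'
  by_cases h : ∃ i, z i = some k <;> by_cases h' : ∃ i, z i = some k'
  · have := apply_firstOccurrence_of_exists h'
    simp only [← hkk', apply_firstOccurrence_of_exists h, Option.some.injEq] at this
    exact this
  all_goals
    simp only [firstOccurrence, dif_pos, dif_neg, h, h', not_false_eq_true] at hkk'
    omega

theorem exists_perm_le_of_eq_some :
    ∃ π : Perm (Fin n), ∀ i k, z i = some k → (π k : ℕ) ≤ i := by
  set f := firstOccurrence z
  have hsorted : StrictMono (f ∘ Tuple.sort f) :=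
    (Tuple.monotone_sort f).strictMono_of_injective
      ((firstOccurrence_injective z).comp (Tuple.sort f).injective)
  refine ⟨(Tuple.sort f).symm, fun i k hik => ?_⟩
  calc ((Tuple.sort f).symm k : ℕ) ≤ f (Tuple.sort f ((Tuple.sort f).symm k)) :=
        Fin.val_le_of_strictMono hsorted _
    _ = f k := by rw [Equiv.apply_symm_apply]
    _ ≤ i := firstOccurrence_le hik

end FirstOccurrence

theorem drd_strong_ordered_range_extended_general {B : Type*}
    {n m : ℕ} (X : Set B) (b : Fin n ≃ X) (y : Fin m → B) :
    ∃ σ : Equiv.Perm B,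
      (∀ v : B, v ∉ X → σ v = v) ∧
      ∀ i : Fin m, (i : ℕ) < n →
        (∃ j : Fin n, (j : ℕ) ≤ (i : ℕ) ∧ σ (y i) = (b j : B)) ∨ σ (y i) ∉ X := by
  classical
  let z : Fin m → Option (Fin n) := fun i => if h : y i ∈ X then some (b.symm ⟨y i, h⟩) else none
  obtain ⟨π, hπ⟩ := exists_perm_le_of_eq_some z
  refine ⟨Perm.ofSubtype (b.permCongr π), fun v hv => Perm.ofSubtype_apply_of_not_mem _ hv,
    fun i _ => ?_⟩
  by_cases hX : y i ∈ X
  · refine Or.inl ⟨π (b.symm ⟨y i, hX⟩), hπ i _ (dif_pos hX), ?_⟩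
    rw [Perm.ofSubtype_apply_of_mem _ hX, permCongr_apply]
  · rw [Perm.ofSubtype_apply_of_not_mem _ hX]
    exact Or.inr hX

/-- Extended soundness core for strong ordered range constraints for DRD
functions: with `X ⊆ B` enumerated by `b : Fin n ≃ X` and an arbitrary
sequence `y : Fin m → B`, there is a permutation `σ` of `B` fixing `B \ X`
pointwise such that for each `i < min m n` (0-indexed),
`σ(y_i) ∈ {b₀, …, b_i} ∪ (B \ X)`. -/
theorem drd_strong_ordered_range_extended {B : Type*} [Fintype B]
    {n m : ℕ} (X : Set B) (b : Fin n ≃ X) (y : Fin m → B) :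
    ∃ σ : Equiv.Perm B,
      (∀ v : B, v ∉ X → σ v = v) ∧
      ∀ i : Fin m, (i : ℕ) < n →
        (∃ j : Fin n, (j : ℕ) ≤ (i : ℕ) ∧ σ (y i) = (b j : B)) ∨ σ (y i) ∉ X :=
  drd_strong_ordered_range_extended_general X b y
end

section
/- Let A be a finite set, X a subset of A enumerated as d₁, …, d_m, and let S be any subset of A. There exists a permutation σ of A that fixes every element of A \ X such that the pointwise image σ(S) equals (S \ X) ∪ {d₁, …, d_k}, where k = |S ∩ X|; in particular σ(S) ∩ X = {d₁, …, d_k}. -/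
/-!
Pull `S ∩ X` back along `d` to `T = {j | d j ∈ S} ⊆ Fin m`, a set of size `k = |S ∩ X|`.
Equinumerous subsets of a finite type are carried onto each other by a permutation, so some
`τ : Perm (Fin m)` maps `T` onto the initial segment `{j | j < k}`; extending `τ` by the
identity outside `X` gives the required permutation of `A`.
-/

namespace Equiv

theorem range_coe_subtype {α β : Type*} {p : β → Prop} (f : α ≃ Subtype p) :
    Set.range (fun a => (f a : β)) = {b | p b} := by
  rw [Set.range_comp' Subtype.val f, f.range_eq_univ, Set.image_univ, Subtype.range_coe_subtype]

theorem Perm.exists_image_eq_of_ncard_eq {α : Type*} [Finite α] {s t : Set α}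
    (h : s.ncard = t.ncard) : ∃ σ : Perm α, σ '' s = t := by
  classical
  have := Fintype.ofFinite α
  obtain ⟨σ, hσ⟩ := (Set.powersetCard.isPretransitive (α := α) (n := s.ncard)).exists_smul_eq
    ⟨s.toFinset, by simp [Set.powersetCard, Set.ncard_eq_toFinset_card']⟩
    ⟨t.toFinset, by simp [Set.powersetCard, h, Set.ncard_eq_toFinset_card']⟩
  refine ⟨σ, ?_⟩
  have hσ' := congrArg Subtype.val hσ
  rw [Set.powersetCard.coe_smul] at hσ'
  simpa [← Set.image_smul, Perm.smul_def] using congrArg (fun u : Finset α => (u : Set α)) hσ'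

theorem Perm.image_extendDomain {α β : Type*} {p : β → Prop} [DecidablePred p]
    (e : Perm α) (f : α ≃ Subtype p) (S : Set β) :
    e.extendDomain f '' S =
      (S \ {b | p b}) ∪ (fun a => (f a : β)) '' (e '' ((fun a => (f a : β)) ⁻¹' S)) := by
  have hfix : e.extendDomain f '' (S \ {b | p b}) = S \ {b | p b} :=
    (Set.image_congr fun b hb => extendDomain_apply_not_subtype e f hb.2).trans (Set.image_id' _)
  have hmove : e.extendDomain f '' (S ∩ {b | p b}) =
      (fun a => (f a : β)) '' (e '' ((fun a => (f a : β)) ⁻¹' S)) := by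
    rw [← range_coe_subtype f, ← Set.image_preimage_eq_inter_range, Set.image_image,
      Set.image_image]
    simp only [extendDomain_apply_image]
  conv_lhs => rw [← Set.sdiff_union_inter S {b | p b}]
  rw [Set.image_union, hfix, hmove]

end Equiv

theorem predicate_membership_perm_extended_general {A : Type*} {m : ℕ}
    (X : Set A) (d : Fin m ≃ X) (S : Set A) :
    ∃ σ : Equiv.Perm A,
      (∀ v : A, v ∉ X → σ v = v) ∧
      (σ : A → A) '' S =
        (S \ X) ∪ {v : A | ∃ j : Fin m, (j : ℕ) < (S ∩ X).ncard ∧ v = (d j : A)} ∧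
      ((σ : A → A) '' S) ∩ X =
        {v : A | ∃ j : Fin m, (j : ℕ) < (S ∩ X).ncard ∧ v = (d j : A)} := by
  classical
  set k := (S ∩ X).ncard
  have hrange : Set.range (fun j => (d j : A)) = X := d.range_coe_subtype
  have hT : ((fun j => (d j : A)) ⁻¹' S).ncard = k := by
    rw [← Set.preimage_inter_range, hrange]
    exact Set.ncard_preimage_of_injective_subset_range (Subtype.val_injective.comp d.injective)
      (hrange.symm ▸ Set.inter_subset_right)
  have hkm : k ≤ m := hT ▸ (Set.ncard_le_card _).trans_eq (Nat.card_fin m)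
  obtain ⟨τ, hτ⟩ := Equiv.Perm.exists_image_eq_of_ncard_eq (t := {j : Fin m | (j : ℕ) < k}) <| by
    rw [hT, ← Fin.range_castLE hkm, Set.ncard_range_of_injective (Fin.castLE_injective hkm),
      Nat.card_fin]
  have himage : τ.extendDomain d '' S =
      (S \ X) ∪ {v : A | ∃ j : Fin m, (j : ℕ) < k ∧ v = (d j : A)} := by
    rw [Equiv.Perm.image_extendDomain, hτ, Set.ofPred_mem_eq]
    ext v
    simp [eq_comm]
  refine ⟨τ.extendDomain d, fun v hv => Equiv.Perm.extendDomain_apply_not_subtype τ d hv,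
    himage, ?_⟩
  rw [himage, Set.union_inter_distrib_right, Set.sdiff_inter_self, Set.empty_union,
    Set.inter_eq_left]
  rintro _ ⟨j, -, rfl⟩
  exact (d j).2

/-- Extended soundness core for predicate membership constraints: with `X ⊆ A`
enumerated by `d : Fin m ≃ X` and any `S ⊆ A`, there is a permutation `σ` of
`A` fixing `A \ X` pointwise whose pointwise image of `S` is
`(S \ X) ∪ {d₀, …, d_{k-1}}` where `k = |S ∩ X|`; in particular
`σ(S) ∩ X = {d₀, …, d_{k-1}}`. -/
theorem predicate_membership_perm_extended {A : Type*} [Fintype A] {m : ℕ}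
    (X : Set A) (d : Fin m ≃ X) (S : Set A) :
    ∃ σ : Equiv.Perm A,
      (∀ v : A, v ∉ X → σ v = v) ∧
      (σ : A → A) '' S =
        (S \ X) ∪ {v : A | ∃ j : Fin m, (j : ℕ) < (S ∩ X).ncard ∧ v = (d j : A)} ∧
      ((σ : A → A) '' S) ∩ X =
        {v : A | ∃ j : Fin m, (j : ℕ) < (S ∩ X).ncard ∧ v = (d j : A)} :=
  predicate_membership_perm_extended_general X d S
end
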